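/- arXiv:2012.02768 — 5 statements merged into one kernel-verified Lean document; each statement's English description precedes it below -/
import Mathlib

section
/- Let N ≥ 1 and let w₁A, w₁B ∈ ℂ^N be the per-polarization excitation vectors of a dual-polarized uniform linear protoarray. Define the companion weights w₂A = −J_N · conj(w₁B) and w₂B = J_N · conj(w₁A), and the expanded weights wA = (w₁A ; w₂A) ∈ ℂ^{2N}, wB = (w₁B ; w₂B) ∈ ℂ^{2N} by concatenation. Then for every electrical angle ψ ∈ ℝ, the total power pattern of the expanded array equals twice that of the protoarray: |wAᵀ a_{2N}(ψ)|² + |wBᵀ a_{2N}(ψ)|² = 2·(|w₁Aᵀ a_N(ψ)|² + |w₁Bᵀ a_N(ψ)|²). -/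
/-!
Reversing the index turns the tail of each expanded array factor into the unimodular phase
`z = exp (i (2N - 1) ψ)` times the conjugate response of the *other* polarization, so with
`α = w₁Aᵀ a_N(ψ)` and `β = w₁Bᵀ a_N(ψ)` the expanded responses are `α - z β̄` and `β + z ᾱ`.
As in the Alamouti code, the cross terms `∓ 2 Re (α z̄ β)` of the two squared moduli cancel.
-/

open Finset

/-- Steering vector of an `N`-element uniform linear array at electrical angle `ψ`:
`(a_N(ψ))_n = exp(i n ψ)`. -/
noncomputable def steer (N : ℕ) (ψ : ℝ) : Fin N → ℂ :=
  fun n => Complex.exp (Complex.I * ((n : ℕ) : ℂ) * (ψ : ℂ))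

/-- Bilinear dot product `wᵀ a = ∑ n, w n * a n`. -/
noncomputable def dotp {N : ℕ} (w a : Fin N → ℂ) : ℂ := ∑ n, w n * a n

open Complex ComplexConjugate

theorem norm_sub_mul_conj_sq_add_norm_add_mul_conj_sq {z : ℂ} (hz : ‖z‖ = 1) (a b : ℂ) :
    ‖a - z * conj b‖ ^ 2 + ‖b + z * conj a‖ ^ 2 = 2 * (‖a‖ ^ 2 + ‖b‖ ^ 2) := by
  have hz2 : normSq z = 1 := by rw [← Complex.sq_norm, hz, one_pow]
  have hcross : (a * conj (z * conj b)).re = (b * conj (z * conj a)).re := by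
    simp only [map_mul, conj_conj]
    ring_nf
  simp only [Complex.sq_norm, normSq_sub, normSq_add, normSq_mul, normSq_conj, hz2, hcross]
  ring

theorem norm_exp_I_mul_natCast_mul_ofReal (k : ℕ) (ψ : ℝ) :
    ‖exp (I * k * ψ)‖ = 1 := by
  simpa [mul_assoc] using norm_exp_I_mul_ofReal (k * ψ)

theorem steer_castAdd (M N : ℕ) (ψ : ℝ) (m : Fin M) :
    steer (M + N) ψ (Fin.castAdd N m) = steer M ψ m := rfl

theorem steer_natAdd (M N : ℕ) (ψ : ℝ) (n : Fin N) :
    steer (M + N) ψ (Fin.natAdd M n) = exp (I * M * ψ) * steer N ψ n := by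
  simp only [steer, Fin.val_natAdd, Nat.cast_add, ← exp_add]
  ring_nf

theorem steer_rev (N : ℕ) (ψ : ℝ) (n : Fin N) :
    steer N ψ n.rev = exp (I * (N - 1 : ℕ) * ψ) * conj (steer N ψ n) := by
  have hn : (n : ℕ) ≤ N - 1 := by omega
  simp only [steer, Fin.val_rev, ← exp_conj, map_mul, conj_I, conj_natCast, conj_ofReal,
    ← exp_add]
  rw [show N - (n + 1) = N - 1 - n by omega, Nat.cast_sub hn]
  ring_nf

theorem dotp_append_steer {M N : ℕ} (u : Fin M → ℂ) (v : Fin N → ℂ) (ψ : ℝ) :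
    dotp (Fin.append u v) (steer (M + N) ψ)
      = dotp u (steer M ψ) + exp (I * M * ψ) * dotp v (steer N ψ) := by
  simp only [dotp, Fin.sum_univ_add, Fin.append_left, Fin.append_right, steer_castAdd,
    steer_natAdd, mul_sum]
  congr 1
  exact sum_congr rfl fun n _ => by ring

theorem dotp_neg_left {N : ℕ} (w a : Fin N → ℂ) :
    dotp (fun n => -w n) a = -dotp w a := by
  simp only [dotp, neg_mul, sum_neg_distrib]

theorem dotp_conj_rev_steer {N : ℕ} (w : Fin N → ℂ) (ψ : ℝ) :
    dotp (fun n => conj (w n.rev)) (steer N ψ)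
      = exp (I * (N - 1 : ℕ) * ψ) * conj (dotp w (steer N ψ)) := by
  rw [dotp, ← Equiv.sum_comp Fin.revPerm]
  simp only [Fin.revPerm_apply, Fin.rev_rev, steer_rev, dotp, map_sum, map_mul, mul_sum]
  exact sum_congr rfl fun n _ => by ring

theorem asi_ula_expansion_preserves_pattern_general
    (N : ℕ) (w1A w1B : Fin N → ℂ)
    (w2A w2B : Fin N → ℂ)
    (h2A : w2A = fun n => -(starRingEnd ℂ) (w1B n.rev))
    (h2B : w2B = fun n => (starRingEnd ℂ) (w1A n.rev))
    (wA wB : Fin (N + N) → ℂ)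
    (hA : wA = Fin.append w1A w2A)
    (hB : wB = Fin.append w1B w2B)
    (ψ : ℝ) :
    ‖dotp wA (steer (N + N) ψ)‖ ^ 2
      + ‖dotp wB (steer (N + N) ψ)‖ ^ 2
    = 2 * (‖dotp w1A (steer N ψ)‖ ^ 2
      + ‖dotp w1B (steer N ψ)‖ ^ 2) := by
  subst h2A h2B hA hB
  set z := exp (I * N * ψ) * exp (I * (N - 1 : ℕ) * ψ)
  have hz : ‖z‖ = 1 := by
    simp only [z, norm_mul, norm_exp_I_mul_natCast_mul_ofReal, mul_one]
  rw [dotp_append_steer, dotp_append_steer, dotp_neg_left, dotp_conj_rev_steer,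
    dotp_conj_rev_steer, ← norm_sub_mul_conj_sq_add_norm_add_mul_conj_sq hz]
  congr 3 <;> ring

theorem asi_ula_expansion_preserves_pattern
    (N : ℕ) (hN : 1 ≤ N) (w1A w1B : Fin N → ℂ)
    (w2A w2B : Fin N → ℂ)
    (h2A : w2A = fun n => -(starRingEnd ℂ) (w1B n.rev))
    (h2B : w2B = fun n => (starRingEnd ℂ) (w1A n.rev))
    (wA wB : Fin (N + N) → ℂ)
    (hA : wA = Fin.append w1A w2A)
    (hB : wB = Fin.append w1B w2B)
    (ψ : ℝ) :
    ‖dotp wA (steer (N + N) ψ)‖ ^ 2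
      + ‖dotp wB (steer (N + N) ψ)‖ ^ 2
    = 2 * (‖dotp w1A (steer N ψ)‖ ^ 2
      + ‖dotp w1B (steer N ψ)‖ ^ 2) :=
  asi_ula_expansion_preserves_pattern_general N w1A w1B w2A w2B h2A h2B wA wB hA hB ψ
end

section
/- Let N ≥ 1 and let wA, wB ∈ ℂ^N be arbitrary. Then for every ψ ∈ ℝ, the cross term between the field radiated with weights (wA, wB) and the field radiated with the companion weights (−J_N·conj(wB), J_N·conj(wA)) vanishes: conj(wAᵀ a_N(ψ)) · ((−J_N·conj(wB))ᵀ a_N(ψ)) + conj(wBᵀ a_N(ψ)) · ((J_N·conj(wA))ᵀ a_N(ψ)) = 0. -/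
open Finset

lemma rev_dotp (N : ℕ) (w : Fin N → ℂ) (ψ : ℝ) :
    dotp (fun n => (starRingEnd ℂ) (w n.rev)) (steer N ψ)
      = Complex.exp (Complex.I * ((N : ℂ) - 1) * (ψ : ℂ))
        * (starRingEnd ℂ) (dotp w (steer N ψ)) := by
  unfold dotp steer
  rw [map_sum, Finset.mul_sum]
  refine Fintype.sum_equiv Fin.revPerm _ _ (fun n => ?_)
  simp only [Fin.revPerm_apply, Fin.rev_rev]
  have h1 : ((n.rev : ℕ) : ℂ) = (N : ℂ) - 1 - (n : ℕ) := by
    rw [Fin.val_rev]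
    have : (n : ℕ) + 1 ≤ N := n.2
    push_cast [Nat.cast_sub this]
    ring
  rw [h1, map_mul, ← Complex.exp_conj]
  have h2 : (starRingEnd ℂ) (Complex.I * ((N : ℂ) - 1 - ((n : ℕ) : ℂ)) * (ψ : ℂ))
      = -(Complex.I * ((N : ℂ) - 1 - ((n : ℕ) : ℂ)) * (ψ : ℂ)) := by
    simp [Complex.conj_I]
  rw [h2]
  conv_rhs => rw [mul_left_comm, ← Complex.exp_add]
  congr 1
  ring

theorem asi_ula_cross_term_vanishes
    (N : ℕ) (hN : 1 ≤ N) (wA wB : Fin N → ℂ) (ψ : ℝ) :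
    (starRingEnd ℂ) (dotp wA (steer N ψ))
        * dotp (fun n => -(starRingEnd ℂ) (wB n.rev)) (steer N ψ)
      + (starRingEnd ℂ) (dotp wB (steer N ψ))
        * dotp (fun n => (starRingEnd ℂ) (wA n.rev)) (steer N ψ) = 0 := by
  have hneg : dotp (fun n => -(starRingEnd ℂ) (wB n.rev)) (steer N ψ)
      = -dotp (fun n => (starRingEnd ℂ) (wB n.rev)) (steer N ψ) := by
    unfold dotp; simp [neg_mul]
  rw [hneg, rev_dotp N wA ψ, rev_dotp N wB ψ]
  ring
end

section
/- Let M, N ≥ 1, let W₁A, W₁B ∈ ℂ^{M×N}, and define the companion matrices W₂A = −J_M · conj(W₁B) · J_N and W₂B = J_M · conj(W₁A) · J_N. Then for all ψy, ψz ∈ ℝ, writing F(W) = ∑_{m<M, n<N} W_{m,n} e^{i(nψy+mψz)}, the cross term between the protoarray and companion fields vanishes: conj(F(W₁A)) · F(W₂A) + conj(F(W₁B)) · F(W₂B) = 0. -/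
open Finset

/-- `(m,n)` entry of the steering matrix of an `M×N` uniform rectangular array:
`exp(i(n ψy + m ψz))`. -/
noncomputable def steerM (M N : ℕ) (ψy ψz : ℝ) : Fin M → Fin N → ℂ :=
  fun m n => Complex.exp (Complex.I * (((n : ℕ) : ℂ) * (ψy : ℂ) + ((m : ℕ) : ℂ) * (ψz : ℂ)))

/-- Radiated far field of an `M×N` array with excitation `W`:
`F(W) = ∑_{m,n} W m n · exp(i(n ψy + m ψz))`. -/
noncomputable def fieldF {M N : ℕ} (W : Fin M → Fin N → ℂ) (ψy ψz : ℝ) : ℂ :=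
  ∑ m, ∑ n, W m n * steerM M N ψy ψz m n

lemma fieldF_rev_conj {M N : ℕ} (W : Fin M → Fin N → ℂ) (ψy ψz : ℝ) :
    fieldF (fun m n => (starRingEnd ℂ) (W m.rev n.rev)) ψy ψz
      = Complex.exp (Complex.I * (((N : ℂ) - 1) * (ψy : ℂ) + ((M : ℂ) - 1) * (ψz : ℂ)))
        * (starRingEnd ℂ) (fieldF W ψy ψz) := by
  unfold fieldF
  rw [← Equiv.sum_comp (Fin.revPerm (n := M))]
  simp only [Fin.revPerm_apply, Fin.rev_rev]
  rw [map_sum, Finset.mul_sum]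
  refine Finset.sum_congr rfl fun m _ => ?_
  rw [← Equiv.sum_comp (Fin.revPerm (n := N))]
  simp only [Fin.revPerm_apply, Fin.rev_rev]
  rw [map_sum, Finset.mul_sum]
  refine Finset.sum_congr rfl fun n _ => ?_
  rw [map_mul]
  have hm : ((m.rev : ℕ) : ℂ) = (M : ℂ) - 1 - (m : ℕ) := by
    have h1 : (m.rev : ℕ) = M - 1 - (m : ℕ) := by
      rw [Fin.val_rev]; omega
    rw [h1]
    have hle : (m : ℕ) ≤ M - 1 := Nat.le_sub_one_of_lt m.2
    push_cast [Nat.cast_sub hle, Nat.cast_sub (Nat.one_le_of_lt m.2)]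
    ring
  have hn : ((n.rev : ℕ) : ℂ) = (N : ℂ) - 1 - (n : ℕ) := by
    have h1 : (n.rev : ℕ) = N - 1 - (n : ℕ) := by
      rw [Fin.val_rev]; omega
    rw [h1]
    have hle : (n : ℕ) ≤ N - 1 := Nat.le_sub_one_of_lt n.2
    push_cast [Nat.cast_sub hle, Nat.cast_sub (Nat.one_le_of_lt n.2)]
    ring
  have key : Complex.exp (Complex.I * (((n.rev : ℕ) : ℂ) * (ψy : ℂ) + ((m.rev : ℕ) : ℂ) * (ψz : ℂ)))
      = Complex.exp (Complex.I * (((N : ℂ) - 1) * (ψy : ℂ) + ((M : ℂ) - 1) * (ψz : ℂ)))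
        * (starRingEnd ℂ) (Complex.exp (Complex.I * (((n : ℕ) : ℂ) * (ψy : ℂ) + ((m : ℕ) : ℂ) * (ψz : ℂ)))) := by
    rw [← Complex.exp_conj, ← Complex.exp_add]
    congr 1
    simp only [map_add, map_mul, Complex.conj_I, Complex.conj_ofReal, Complex.conj_natCast]
    rw [hm, hn]
    ring
  unfold steerM
  rw [key]
  ring

theorem asi_ura_cross_term_vanishes
    (M N : ℕ) (hM : 1 ≤ M) (hN : 1 ≤ N)
    (W1A W1B : Fin M → Fin N → ℂ)
    (W2A W2B : Fin M → Fin N → ℂ)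
    (h2A : W2A = fun m n => -(starRingEnd ℂ) (W1B m.rev n.rev))
    (h2B : W2B = fun m n => (starRingEnd ℂ) (W1A m.rev n.rev))
    (ψy ψz : ℝ) :
    (starRingEnd ℂ) (fieldF W1A ψy ψz) * fieldF W2A ψy ψz
      + (starRingEnd ℂ) (fieldF W1B ψy ψz) * fieldF W2B ψy ψz = 0 := by
  have hA : fieldF W2A ψy ψz
      = -(Complex.exp (Complex.I * (((N : ℂ) - 1) * (ψy : ℂ) + ((M : ℂ) - 1) * (ψz : ℂ)))
        * (starRingEnd ℂ) (fieldF W1B ψy ψz)) := by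
    rw [h2A, ← fieldF_rev_conj]
    unfold fieldF
    simp [neg_mul, Finset.sum_neg_distrib]
  have hB : fieldF W2B ψy ψz
      = Complex.exp (Complex.I * (((N : ℂ) - 1) * (ψy : ℂ) + ((M : ℂ) - 1) * (ψz : ℂ)))
        * (starRingEnd ℂ) (fieldF W1A ψy ψz) := by
    rw [h2B, fieldF_rev_conj]
  rw [hA, hB]
  ring
end

section
/- Let M, N ≥ 1 and W₁A, W₁B ∈ ℂ^{M×N}. Let V denote the vertical expansion operator taking (WA, WB) with WA, WB ∈ ℂ^{P×Q} to ([WA ; −J_P·conj(WB)·J_Q], [WB ; J_P·conj(WA)·J_Q]) ∈ ℂ^{2P×Q} × ℂ^{2P×Q}, and H the horizontal expansion operator taking (WA, WB) to ([WA , −J_P·conj(WB)·J_Q], [WB , J_P·conj(WA)·J_Q]) ∈ ℂ^{P×2Q} × ℂ^{P×2Q}. Then the order of expansion does not influence the total power pattern: for all ψy, ψz ∈ ℝ, the total power pattern of H(V(W₁A, W₁B)) at (ψy, ψz) equals the total power pattern of V(H(W₁A, W₁B)) at (ψy, ψz), both being 4·(|∑_{m<M,n<N}(W₁A)_{m,n}e^{i(nψy+mψz)}|²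 + |∑_{m<M,n<N}(W₁B)_{m,n}e^{i(nψy+mψz)}|²). -/
open Finset

/-- Total power pattern of a dual-polarized pair of excitation matrices. -/
noncomputable def totalPattern {M N : ℕ}
    (W : (Fin M → Fin N → ℂ) × (Fin M → Fin N → ℂ)) (ψy ψz : ℝ) : ℝ :=
  ‖fieldF W.1 ψy ψz‖ ^ 2 + ‖fieldF W.2 ψy ψz‖ ^ 2

/-- Vertical ASI expansion: stack the companion `(-J·conj WB·J, J·conj WA·J)`
below the protoarray. -/
noncomputable def vexp {P Q : ℕ} (W : (Fin P → Fin Q → ℂ) × (Fin P → Fin Q → ℂ)) :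
    (Fin (P + P) → Fin Q → ℂ) × (Fin (P + P) → Fin Q → ℂ) :=
  (fun m n => Fin.append (fun i => W.1 i n)
      (fun i => -(starRingEnd ℂ) (W.2 i.rev n.rev)) m,
   fun m n => Fin.append (fun i => W.2 i n)
      (fun i => (starRingEnd ℂ) (W.1 i.rev n.rev)) m)

/-- Horizontal ASI expansion: append the companion `(-J·conj WB·J, J·conj WA·J)`
to the right of the protoarray. -/
noncomputable def hexp {P Q : ℕ} (W : (Fin P → Fin Q → ℂ) × (Fin P → Fin Q → ℂ)) :
    (Fin P → Fin (Q + Q) → ℂ) × (Fin P → Fin (Q + Q) → ℂ) :=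
  (fun m => Fin.append (fun j => W.1 m j)
      (fun j => -(starRingEnd ℂ) (W.2 m.rev j.rev)),
   fun m => Fin.append (fun j => W.2 m j)
      (fun j => (starRingEnd ℂ) (W.1 m.rev j.rev)))

/-!
Each expansion, vertical or horizontal, doubles the total power pattern. The field of the
companion block `∓J·conj(W)·J`, placed at an offset, equals a unimodular phase `a` times the
conjugate of the field of `W`, so the expanded fields are `x - a·ȳ` and `y + a·x̄`, and
`‖x - a·ȳ‖² + ‖y + a·x̄‖² = 2(‖x‖² + ‖y‖²)` since the cross terms cancel. Hence both orders
of expansion multiply the pattern by four.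
-/

noncomputable def steerPhase (p q : ℕ) (ψy ψz : ℝ) : ℂ :=
  Complex.exp (Complex.I * ((q : ℂ) * (ψy : ℂ) + (p : ℂ) * (ψz : ℂ)))

lemma steerM_eq_steerPhase {M N : ℕ} (ψy ψz : ℝ) (m : Fin M) (n : Fin N) :
    steerM M N ψy ψz m n = steerPhase m n ψy ψz := rfl

lemma steerPhase_add (p q p' q' : ℕ) (ψy ψz : ℝ) :
    steerPhase (p + p') (q + q') ψy ψz = steerPhase p q ψy ψz * steerPhase p' q' ψy ψz := by
  simp only [steerPhase, ← Complex.exp_add]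
  push_cast
  ring_nf

lemma norm_steerPhase (p q : ℕ) (ψy ψz : ℝ) : ‖steerPhase p q ψy ψz‖ = 1 := by
  rw [steerPhase, mul_comm]
  exact_mod_cast Complex.norm_exp_ofReal_mul_I (q * ψy + p * ψz)

lemma mul_conj_eq_one_of_norm_eq_one {a : ℂ} (ha : ‖a‖ = 1) : a * starRingEnd ℂ a = 1 := by
  rw [Complex.mul_conj', ha]
  norm_num

lemma steerPhase_rev {P Q : ℕ} (ψy ψz : ℝ) (m : Fin P) (n : Fin Q) :
    steerPhase m.rev n.rev ψy ψz
      = steerPhase (P - 1) (Q - 1) ψy ψz * starRingEnd ℂ (steerPhase m n ψy ψz) := by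
  have hsplit : steerPhase (P - 1) (Q - 1) ψy ψz
      = steerPhase m.rev n.rev ψy ψz * steerPhase m n ψy ψz := by
    rw [← steerPhase_add, Fin.val_rev, Fin.val_rev]
    congr 1 <;> omega
  rw [hsplit, mul_assoc, mul_conj_eq_one_of_norm_eq_one (norm_steerPhase _ _ _ _), mul_one]

lemma fieldF_neg {P Q : ℕ} (W : Fin P → Fin Q → ℂ) (ψy ψz : ℝ) :
    fieldF (fun m n => -W m n) ψy ψz = -fieldF W ψy ψz := by
  simp [fieldF, Finset.sum_neg_distrib]

lemma fieldF_conj_rev {P Q : ℕ} (W : Fin P → Fin Q → ℂ) (ψy ψz : ℝ) :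
    fieldF (fun m n => starRingEnd ℂ (W m.rev n.rev)) ψy ψz
      = steerPhase (P - 1) (Q - 1) ψy ψz * starRingEnd ℂ (fieldF W ψy ψz) := by
  have hrev : fieldF (fun m n => starRingEnd ℂ (W m.rev n.rev)) ψy ψz
      = ∑ m, ∑ n, starRingEnd ℂ (W m n) * steerPhase m.rev n.rev ψy ψz := by
    unfold fieldF
    rw [← Equiv.sum_comp Fin.revPerm]
    refine Finset.sum_congr rfl fun m _ => ?_
    rw [← Equiv.sum_comp Fin.revPerm]
    simp [steerM_eq_steerPhase]
  rw [hrev]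
  simp only [steerPhase_rev, fieldF, steerM_eq_steerPhase, map_sum, map_mul, Finset.mul_sum]
  refine Finset.sum_congr rfl fun m _ => Finset.sum_congr rfl fun n _ => ?_
  ring

lemma fieldF_append_rows {P Q : ℕ} (U L : Fin P → Fin Q → ℂ) (ψy ψz : ℝ) :
    fieldF (fun m n => Fin.append (fun i => U i n) (fun i => L i n) m) ψy ψz
      = fieldF U ψy ψz + steerPhase P 0 ψy ψz * fieldF L ψy ψz := by
  simp only [fieldF, Fin.sum_univ_add, Fin.append_left, Fin.append_right, Finset.mul_sum,
    steerM_eq_steerPhase, Fin.val_castAdd, Fin.val_natAdd]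
  congr 1
  refine Finset.sum_congr rfl fun m _ => Finset.sum_congr rfl fun n _ => ?_
  rw [← zero_add (n : ℕ), steerPhase_add, zero_add]
  ring

lemma fieldF_append_cols {P Q : ℕ} (U L : Fin P → Fin Q → ℂ) (ψy ψz : ℝ) :
    fieldF (fun m => Fin.append (U m) (L m)) ψy ψz
      = fieldF U ψy ψz + steerPhase 0 Q ψy ψz * fieldF L ψy ψz := by
  simp only [fieldF, Fin.sum_univ_add, Fin.append_left, Fin.append_right, Finset.mul_sum,
    steerM_eq_steerPhase, Fin.val_castAdd, Fin.val_natAdd, Finset.sum_add_distrib]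
  congr 1
  refine Finset.sum_congr rfl fun m _ => Finset.sum_congr rfl fun n _ => ?_
  rw [← zero_add (m : ℕ), steerPhase_add, zero_add]
  ring

lemma norm_sq_sub_add_norm_sq_add {a : ℂ} (ha : ‖a‖ = 1) (x y : ℂ) :
    ‖x - a * starRingEnd ℂ y‖ ^ 2 + ‖y + a * starRingEnd ℂ x‖ ^ 2
      = 2 * (‖x‖ ^ 2 + ‖y‖ ^ 2) := by
  apply Complex.ofReal_injective
  push_cast [← Complex.mul_conj']
  simp only [map_sub, map_add, map_mul, Complex.conj_conj]
  linear_combination (x * starRingEnd ℂ x + y * starRingEnd ℂ y)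
    * mul_conj_eq_one_of_norm_eq_one ha

lemma totalPattern_vexp {P Q : ℕ} (W : (Fin P → Fin Q → ℂ) × (Fin P → Fin Q → ℂ))
    (ψy ψz : ℝ) : totalPattern (vexp W) ψy ψz = 2 * totalPattern W ψy ψz := by
  set a := steerPhase P 0 ψy ψz * steerPhase (P - 1) (Q - 1) ψy ψz
  have ha : ‖a‖ = 1 := by simp only [a, norm_mul, norm_steerPhase, mul_one]
  have hA : fieldF (vexp W).1 ψy ψz
      = fieldF W.1 ψy ψz - a * starRingEnd ℂ (fieldF W.2 ψy ψz) := by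
    rw [vexp, fieldF_append_rows, fieldF_neg, fieldF_conj_rev]
    ring
  have hB : fieldF (vexp W).2 ψy ψz
      = fieldF W.2 ψy ψz + a * starRingEnd ℂ (fieldF W.1 ψy ψz) := by
    rw [vexp, fieldF_append_rows, fieldF_conj_rev]
    ring
  rw [totalPattern, totalPattern, hA, hB, norm_sq_sub_add_norm_sq_add ha]

lemma totalPattern_hexp {P Q : ℕ} (W : (Fin P → Fin Q → ℂ) × (Fin P → Fin Q → ℂ))
    (ψy ψz : ℝ) : totalPattern (hexp W) ψy ψz = 2 * totalPattern W ψy ψz := by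
  set a := steerPhase 0 Q ψy ψz * steerPhase (P - 1) (Q - 1) ψy ψz
  have ha : ‖a‖ = 1 := by simp only [a, norm_mul, norm_steerPhase, mul_one]
  have hA : fieldF (hexp W).1 ψy ψz
      = fieldF W.1 ψy ψz - a * starRingEnd ℂ (fieldF W.2 ψy ψz) := by
    rw [hexp, fieldF_append_cols, fieldF_neg, fieldF_conj_rev]
    ring
  have hB : fieldF (hexp W).2 ψy ψz
      = fieldF W.2 ψy ψz + a * starRingEnd ℂ (fieldF W.1 ψy ψz) := by
    rw [hexp, fieldF_append_cols, fieldF_conj_rev]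
    ring
  rw [totalPattern, totalPattern, hA, hB, norm_sq_sub_add_norm_sq_add ha]

theorem asi_ura_expansion_order_irrelevant_general
    (M N : ℕ)
    (W1A W1B : Fin M → Fin N → ℂ) (ψy ψz : ℝ) :
    totalPattern (hexp (vexp (W1A, W1B))) ψy ψz
        = totalPattern (vexp (hexp (W1A, W1B))) ψy ψz
      ∧ totalPattern (hexp (vexp (W1A, W1B))) ψy ψz
        = 4 * (‖fieldF W1A ψy ψz‖ ^ 2
            + ‖fieldF W1B ψy ψz‖ ^ 2) := by
  rw [totalPattern_hexp, totalPattern_vexp, totalPattern_vexp, totalPattern_hexp,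
    totalPattern]
  constructor <;> ring

theorem asi_ura_expansion_order_irrelevant
    (M N : ℕ) (hM : 1 ≤ M) (hN : 1 ≤ N)
    (W1A W1B : Fin M → Fin N → ℂ) (ψy ψz : ℝ) :
    totalPattern (hexp (vexp (W1A, W1B))) ψy ψz
        = totalPattern (vexp (hexp (W1A, W1B))) ψy ψz
      ∧ totalPattern (hexp (vexp (W1A, W1B))) ψy ψz
        = 4 * (‖fieldF W1A ψy ψz‖ ^ 2
            + ‖fieldF W1B ψy ψz‖ ^ 2) :=
  asi_ura_expansion_order_irrelevant_general M N W1A W1B ψy ψz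
end

section
/- Let wA = (1, −1, −1, −1, −1, 1, −1, −1) ∈ ℂ^8 and wB = (1, 1, −1, 1, −1, −1, −1, 1) ∈ ℂ^8. Then for every ψ ∈ ℝ, the total array factor is perfectly flat: |wAᵀ a_8(ψ)|² + |wBᵀ a_8(ψ)|² = 16. -/
open Finset

/-!
`(wA, wB)` is a Golay complementary pair, obtained from `(1 - v, -1 - v)` by two interleaving
doublings `(p, q) ↦ (p(z²) + z q(z²), p(z²) - z q(z²))` (up to the sign of one member). For `‖z‖ = 1`
the parallelogram law gives `‖x + z y‖² + ‖x - z y‖² = 2 (‖x‖² + ‖y‖²)`, so each doubling doubles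
the total power, and `‖1 - v‖² + ‖1 + v‖² = 4` on the unit circle yields `2 · 2 · 4 = 16`.
-/

theorem norm_add_mul_sq_add_norm_sub_mul_sq {z : ℂ} (hz : ‖z‖ = 1) (x y : ℂ) :
    ‖x + z * y‖ ^ 2 + ‖x - z * y‖ ^ 2 = 2 * (‖x‖ ^ 2 + ‖y‖ ^ 2) := by
  have h := parallelogram_law_with_norm ℝ x (z * y)
  rw [norm_mul, hz, one_mul] at h
  linear_combination h

theorem steer_apply_eq_pow (N : ℕ) (ψ : ℝ) (n : Fin N) :
    steer N ψ n = Complex.exp (ψ * Complex.I) ^ (n : ℕ) := by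
  rw [steer, ← Complex.exp_nat_mul]
  ring_nf

theorem eight_element_asi_weights_flat_array_factor
    (wA wB : Fin 8 → ℂ)
    (hA : wA = ![1, -1, -1, -1, -1, 1, -1, -1])
    (hB : wB = ![1, 1, -1, 1, -1, -1, -1, 1])
    (ψ : ℝ) :
    ‖dotp wA (steer 8 ψ)‖ ^ 2 + ‖dotp wB (steer 8 ψ)‖ ^ 2 = 16 := by
  set z := Complex.exp (ψ * Complex.I)
  have hz : ‖z‖ = 1 := Complex.norm_exp_ofReal_mul_I ψ
  set c := 1 - z ^ 4
  set d := -(1 + z ^ 4)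
  set x := c + z ^ 2 * d
  set y := -(c - z ^ 2 * d)
  have hxA : dotp wA (steer 8 ψ) = x + z * y := by
    simp only [hA, dotp, Fin.sum_univ_eight, steer_apply_eq_pow, Matrix.cons_val,
      Fin.coe_ofNat_eq_mod, Nat.reduceMod, x, y, c, d]
    ring
  have hxB : dotp wB (steer 8 ψ) = x - z * y := by
    simp only [hB, dotp, Fin.sum_univ_eight, steer_apply_eq_pow, Matrix.cons_val,
      Fin.coe_ofNat_eq_mod, Nat.reduceMod, x, y, c, d]
    ring
  have hcd : ‖c‖ ^ 2 + ‖d‖ ^ 2 = 4 := by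
    have h := norm_add_mul_sq_add_norm_sub_mul_sq (z := z ^ 4) (by simp [hz]) 1 1
    simp only [mul_one, norm_one] at h
    rw [norm_neg]
    linarith
  have hxy : ‖x‖ ^ 2 + ‖y‖ ^ 2 = 8 := by
    rw [norm_neg, norm_add_mul_sq_add_norm_sub_mul_sq (by simp [hz]), hcd]
    norm_num
  rw [hxA, hxB, norm_add_mul_sq_add_norm_sub_mul_sq hz, hxy]
  norm_num
end
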